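/- Let K be a field of characteristic zero, β ∈ K, R = K[ℏ,ℏ⁻¹] the Laurent polynomial ring, and S = R[x¹,x²] ⊗_R Λ(θ⁰,θ¹) as in the context. Define the endomorphisms: L₁ = ℏ∂_{x¹} − 2ℏ x¹∂_{x¹} − ℏ x²∂_{x²} − (1/2)ℏ θ¹∂_{θ¹} + (3/2)ℏ θ⁰∂_{θ⁰}; L₂ = ℏ∂_{x²} − βℏ x²∂_{x¹} − θ⁰θ¹ (the last term is left multiplication by θ⁰θ¹); G = ℏ∂_{θ¹} + θ⁰x² + (1/2)ℏ θ¹∂_{x²} − (1/2)ℏ²β ∂_{θ⁰}∂_{x¹}. Then the element Z = 1 + ℏ⁻¹ x² θ⁰θ¹ of S (which equals exp(ℏ⁻¹ x² θ⁰θ¹)) satisfies L₁ Z = 0, L₂ Z = 0, and G Z = 0; i.e. Z is the partition function of this (2|1)-dimensional super quantum Airy structure. -/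

import Mathlib

/-!
Statement 12: for the (2|1)-dimensional super quantum Airy structure
`L₁, L₂, G` on `S = K[ℏ,ℏ⁻¹][x¹,x²] ⊗ Λ(θ⁰,θ¹)`, the element
`Z = 1 + ℏ⁻¹ x² θ⁰θ¹ = exp(ℏ⁻¹ x² θ⁰θ¹)` satisfies `L₁ Z = L₂ Z = G Z = 0`.
-/

set_option synthInstance.maxHeartbeats 1000000
set_option maxHeartbeats 1000000

noncomputable section
open TensorProduct

variable (K : Type) [Field K] [CharZero K] (β : K)

/-- `R = K[ℏ,ℏ⁻¹]`. -/
abbrev R := LaurentPolynomial K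
/-- `ℏ ∈ R`. -/
def hb : R K := LaurentPolynomial.T 1
/-- The even part `P = R[x¹,x²]`; the variable `x^i` has index `i - 1 : Fin 2`. -/
abbrev Pev := MvPolynomial (Fin 2) (R K)
/-- The odd part `Λ(θ⁰,θ¹)`; the generator `θ^a` has index `a : Fin 2`. -/
abbrev Podd := ExteriorAlgebra (R K) (Fin 2 →₀ R K)
/-- The full carrier `S = P ⊗_R Λ`. -/
abbrev SuperSpace := Pev K ⊗[R K] Podd K

/-- `∂_{x^{a+1}}`, acting through the polynomial factor. -/
def dX (a : Fin 2) : SuperSpace K → SuperSpace K :=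
  LinearMap.rTensor (Podd K) (MvPolynomial.pderiv a).toLinearMap

/-- Multiplication by `x^{a+1}`, acting through the polynomial factor. -/
def mX (a : Fin 2) : SuperSpace K → SuperSpace K :=
  LinearMap.rTensor (Podd K) (LinearMap.mulLeft (R K) (MvPolynomial.X a))

/-- The generator `θ^a` of the exterior algebra. -/
def thetaGen (a : Fin 2) : Podd K := ExteriorAlgebra.ι (R K) (Finsupp.single a 1)

/-- `∂_{θ^a}` (interior product with the dual basis vector), acting through the odd factor. -/
def dT (a : Fin 2) : SuperSpace K → SuperSpace K :=
  LinearMap.lTensor (Pev K) (CliffordAlgebra.contractLeft (Finsupp.lapply a))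

/-- Left multiplication by `θ^a`, acting through the odd factor. -/
def mT (a : Fin 2) : SuperSpace K → SuperSpace K :=
  LinearMap.lTensor (Pev K) (LinearMap.mulLeft (R K) (thetaGen K a))

/-- `L₁ = ℏ∂_{x¹} − 2ℏ x¹∂_{x¹} − ℏ x²∂_{x²} − (1/2)ℏ θ¹∂_{θ¹} + (3/2)ℏ θ⁰∂_{θ⁰}`. -/
def L1 : SuperSpace K → SuperSpace K := fun v =>
  hb K • dX K 0 v - (2 * hb K) • mX K 0 (dX K 0 v) - hb K • mX K 1 (dX K 1 v)
    - (LaurentPolynomial.C ((2 : K)⁻¹) * hb K) • mT K 1 (dT K 1 v)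
    + (LaurentPolynomial.C ((3 : K) / 2) * hb K) • mT K 0 (dT K 0 v)

/-- `L₂ = ℏ∂_{x²} − βℏ x²∂_{x¹} − θ⁰θ¹` (the last term is left multiplication by `θ⁰θ¹`). -/
def L2 : SuperSpace K → SuperSpace K := fun v =>
  hb K • dX K 1 v - (LaurentPolynomial.C β * hb K) • mX K 1 (dX K 0 v)
    - mT K 0 (mT K 1 v)

/-- `G = ℏ∂_{θ¹} + θ⁰x² + (1/2)ℏ θ¹∂_{x²} − (1/2)ℏ²β ∂_{θ⁰}∂_{x¹}`. -/
def Gop : SuperSpace K → SuperSpace K := fun v =>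
  hb K • dT K 1 v + mT K 0 (mX K 1 v)
    + (LaurentPolynomial.C ((2 : K)⁻¹) * hb K) • mT K 1 (dX K 1 v)
    - (LaurentPolynomial.C ((2 : K)⁻¹ * β) * hb K ^ 2) • dT K 0 (dX K 0 v)

/-- `Z = 1 + ℏ⁻¹ x² θ⁰θ¹ ∈ S`. -/
def Zpart : SuperSpace K :=
  1 + (LaurentPolynomial.T (-1) : R K) •
    ((MvPolynomial.X 1 : Pev K) ⊗ₜ[R K] (thetaGen K 0 * thetaGen K 1))

-- auxiliary lemmas
lemma lapply_theta (a b : Fin 2) :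
    (Finsupp.lapply a : (Fin 2 →₀ R K) →ₗ[R K] R K) (Finsupp.single b 1)
      = if a = b then 1 else 0 := by
  simp [Finsupp.lapply_apply, Finsupp.single_apply, eq_comm]

lemma contract_theta (a b : Fin 2) :
    CliffordAlgebra.contractLeft (Finsupp.lapply a) (thetaGen K b)
      = if a = b then 1 else 0 := by
  rw [thetaGen, CliffordAlgebra.contractLeft_ι, lapply_theta]
  split <;> simp

lemma contract_theta01 (a : Fin 2) :
    CliffordAlgebra.contractLeft (Finsupp.lapply a) (thetaGen K 0 * thetaGen K 1)
      = (if a = 0 then 1 else 0 : R K) • thetaGen K 1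
        - (if a = 1 then 1 else 0 : R K) • thetaGen K 0 := by
  conv_lhs => rw [show thetaGen K 0 = CliffordAlgebra.ι (0 : QuadraticForm (R K) (Fin 2 →₀ R K)) (Finsupp.single 0 1) from rfl]
  rw [CliffordAlgebra.contractLeft_ι_mul, lapply_theta, contract_theta]
  split <;> split <;> simp [thetaGen]

lemma theta_sq (a : Fin 2) : thetaGen K a * thetaGen K a = 0 :=
  ExteriorAlgebra.ι_sq_zero _

lemma theta_anticomm :
    thetaGen K 1 * thetaGen K 0 = -(thetaGen K 0 * thetaGen K 1) := by
  have h := ExteriorAlgebra.ι_sq_zero (R := R K) (M := Fin 2 →₀ R K)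
      (Finsupp.single 0 1 + Finsupp.single 1 1)
  rw [map_add, add_mul, mul_add, mul_add] at h
  have h0 := theta_sq K 0
  have h1 := theta_sq K 1
  unfold thetaGen at h0 h1 ⊢
  rw [h0, h1, zero_add, add_zero] at h
  exact eq_neg_of_add_eq_zero_right h

lemma theta_mul_theta01 (a : Fin 2) :
    thetaGen K a * (thetaGen K 0 * thetaGen K 1) = 0 := by
  fin_cases a
  · show thetaGen K 0 * (thetaGen K 0 * thetaGen K 1) = 0
    rw [← mul_assoc, theta_sq, zero_mul]
  · show thetaGen K 1 * (thetaGen K 0 * thetaGen K 1) = 0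
    rw [← mul_assoc, theta_anticomm, neg_mul, mul_assoc, theta_sq, mul_zero, neg_zero]

lemma contract0_theta01 :
    CliffordAlgebra.contractLeft (Finsupp.lapply 0) (thetaGen K 0 * thetaGen K 1)
      = thetaGen K 1 := by
  rw [contract_theta01]; norm_num

lemma contract1_theta01 :
    CliffordAlgebra.contractLeft (Finsupp.lapply 1) (thetaGen K 0 * thetaGen K 1)
      = -thetaGen K 0 := by
  rw [contract_theta01]; norm_num

lemma contract00 :
    CliffordAlgebra.contractLeft (Finsupp.lapply 0) (thetaGen K 0) = 1 := by
  rw [contract_theta]; norm_num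

lemma contract11 :
    CliffordAlgebra.contractLeft (Finsupp.lapply 1) (thetaGen K 1) = 1 := by
  rw [contract_theta]; norm_num

lemma pd_one (a : Fin 2) :
    (MvPolynomial.pderiv a).toLinearMap (1 : Pev K) = 0 := by
  simp

lemma pd01 : (MvPolynomial.pderiv 0).toLinearMap (MvPolynomial.X 1 : Pev K) = 0 := by
  simp [MvPolynomial.pderiv_X_of_ne]

lemma pd11 : (MvPolynomial.pderiv 1).toLinearMap (MvPolynomial.X 1 : Pev K) = 1 := by
  simp

lemma hb_T : hb K * LaurentPolynomial.T (-1) = 1 := by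
  rw [hb, ← LaurentPolynomial.T_add]; norm_num

/-- The element `Z = 1 + ℏ⁻¹x²θ⁰θ¹ (= exp(ℏ⁻¹x²θ⁰θ¹))` is annihilated by
`L₁`, `L₂` and `G`: it is the partition function of this (2|1)-dimensional super quantum
Airy structure. -/
theorem statement12 :
    L1 K (Zpart K) = 0 ∧ L2 K β (Zpart K) = 0 ∧ Gop K β (Zpart K) = 0 := by
  refine ⟨?_, ?_, ?_⟩ <;>
  · simp only [L1, L2, Gop, Zpart, dX, mX, dT, mT, Algebra.TensorProduct.one_def,
      map_add, map_smul, LinearMap.rTensor_tmul, LinearMap.lTensor_tmul,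
      LinearMap.mulLeft_apply, pd_one, pd01, pd11,
      contract0_theta01, contract1_theta01, contract00, contract11,
      CliffordAlgebra.contractLeft_one, theta_mul_theta01, theta_sq,
      mul_one, one_mul, mul_zero, zero_mul, mul_neg, neg_neg,
      TensorProduct.tmul_zero, TensorProduct.zero_tmul, TensorProduct.tmul_neg,
      smul_zero, zero_smul, add_zero, zero_add, sub_zero, smul_neg, map_zero, map_neg, theta_anticomm, map_neg (LinearMap.lTensor (Pev K) (LinearMap.mulLeft (R K) (thetaGen K 1)))]
    have hC : (LaurentPolynomial.C ((3 : K) / 2) : R K)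
        = LaurentPolynomial.C ((2 : K)⁻¹) + 1 := by
      rw [show (3 : K) / 2 = 2⁻¹ + 1 by norm_num, map_add, map_one]
    match_scalars <;> simp -failIfUnchanged only [mul_one, mul_neg, mul_assoc, hb_T, hC] <;> ring

end
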